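/- Let X be a doubling metric space and Φ₁, Φ₂ dimension functions with Φ₁(x)/Φ₂(x) → 1 as x → 0. Then for every set E ⊆ X, the upper Φ₁-dimension of E equals the upper Φ₂-dimension of E, and the lower Φ₁-dimension of E equals the lower Φ₂-dimension of E. -/

import Mathlib

open Set Metric Filter Topology
open scoped ENNReal

noncomputable section

/-- The least number of closed balls of radius `r` needed to cover `E`
(`∞` if there is no finite cover). -/
def coverNumber {X : Type*} [PseudoMetricSpace X] (r : ℝ) (E : Set X) : ℝ≥0∞ :=
  ⨅ (s : Finset X) (_ : E ⊆ ⋃ x ∈ s, closedBall x r), (s.card : ℝ≥0∞)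

/-- `Φ : (0,1) → [0,∞)` is a dimension function if `x ^ (1 + Φ x)` decreases to `0`
as `x` decreases to `0`. -/
def IsDimensionFunction (Φ : ℝ → ℝ) : Prop :=
  (∀ x ∈ Ioo (0:ℝ) 1, 0 ≤ Φ x) ∧
  (∀ x ∈ Ioo (0:ℝ) 1, ∀ y ∈ Ioo (0:ℝ) 1, x ≤ y → x ^ (1 + Φ x) ≤ y ^ (1 + Φ y)) ∧
  Tendsto (fun x : ℝ => x ^ (1 + Φ x)) (nhdsWithin 0 (Ioo 0 1)) (nhds 0)

/-- A metric space is doubling if there is `M ≥ 1` such that every closed ball of radius `R`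
can be covered by at most `M` closed balls of radius `R / 2`. -/
def IsDoublingSpace (X : Type*) [PseudoMetricSpace X] : Prop :=
  ∃ M : ℕ, 1 ≤ M ∧ ∀ (x : X) (R : ℝ), ∃ s : Finset X, s.card ≤ M ∧
    closedBall x R ⊆ ⋃ y ∈ s, closedBall y (R / 2)

/-- The upper `Φ`-dimension. -/
def upperPhiDim {X : Type*} [PseudoMetricSpace X] (Φ : ℝ → ℝ) (E : Set X) : ℝ :=
  sInf {α : ℝ | ∃ c₁ > (0:ℝ), ∃ c₂ > (0:ℝ), ∀ r R : ℝ,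
    0 < r → r ≤ R ^ (1 + Φ R) → R ^ (1 + Φ R) ≤ R → R < c₁ → ∀ z ∈ E,
      coverNumber r (closedBall z R ∩ E) ≤ ENNReal.ofReal (c₂ * (R / r) ^ α)}

/-- The lower `Φ`-dimension. -/
def lowerPhiDim {X : Type*} [PseudoMetricSpace X] (Φ : ℝ → ℝ) (E : Set X) : ℝ :=
  sSup {α : ℝ | ∃ c₁ > (0:ℝ), ∃ c₂ > (0:ℝ), ∀ r R : ℝ,
    0 < r → r ≤ R ^ (1 + Φ R) → R ^ (1 + Φ R) ≤ R → R < c₁ → ∀ z ∈ E,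
      ENNReal.ofReal (c₂ * (R / r) ^ α) ≤ coverNumber r (closedBall z R ∩ E)}

/-- The (upper) Assouad dimension: the upper `Φ`-dimension with `Φ ≡ 0`. -/
def assouadDim {X : Type*} [PseudoMetricSpace X] (E : Set X) : ℝ :=
  upperPhiDim (fun _ => 0) E

/-- The lower Assouad dimension: the lower `Φ`-dimension with `Φ ≡ 0`. -/
def lowerAssouadDim {X : Type*} [PseudoMetricSpace X] (E : Set X) : ℝ :=
  lowerPhiDim (fun _ => 0) E

/-- The upper `θ`-Assouad spectrum: the upper `Φ`-dimension with constant `Φ = 1/θ - 1`. -/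
def upperAssouadSpectrum {X : Type*} [PseudoMetricSpace X] (θ : ℝ) (E : Set X) : ℝ :=
  upperPhiDim (fun _ => 1 / θ - 1) E

/-- The lower `θ`-Assouad spectrum: the lower `Φ`-dimension with constant `Φ = 1/θ - 1`. -/
def lowerAssouadSpectrum {X : Type*} [PseudoMetricSpace X] (θ : ℝ) (E : Set X) : ℝ :=
  lowerPhiDim (fun _ => 1 / θ - 1) E

/-- The upper quasi-Assouad dimension, `lim_{θ → 1}` of the upper `θ`-Assouad spectrum;
since the upper spectrum is nondecreasing in `θ`, this limit is the supremum over
`θ ∈ (0,1)`. -/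
def quasiAssouadDim {X : Type*} [PseudoMetricSpace X] (E : Set X) : ℝ :=
  ⨆ θ : Ioo (0:ℝ) 1, upperAssouadSpectrum (θ : ℝ) E

/-- The lower quasi-Assouad dimension, `lim_{θ → 1}` of the lower `θ`-Assouad spectrum;
since the lower spectrum is nonincreasing in `θ`, this limit is the infimum over
`θ ∈ (0,1)`. -/
def quasiLowerAssouadDim {X : Type*} [PseudoMetricSpace X] (E : Set X) : ℝ :=
  ⨅ θ : Ioo (0:ℝ) 1, lowerAssouadSpectrum (θ : ℝ) E

/-- Upper box dimension `limsup_{r → 0} log N_r(E) / |log r|`. -/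
def upperBoxDim {X : Type*} [PseudoMetricSpace X] (E : Set X) : ℝ :=
  limsup (fun r : ℝ => Real.log (coverNumber r E).toReal / |Real.log r|)
    (nhdsWithin 0 (Ioo 0 1))

/-- Lower box dimension `liminf_{r → 0} log N_r(E) / |log r|`. -/
def lowerBoxDim {X : Type*} [PseudoMetricSpace X] (E : Set X) : ℝ :=
  liminf (fun r : ℝ => Real.log (coverNumber r E).toReal / |Real.log r|)
    (nhdsWithin 0 (Ioo 0 1))

/-!
If `Φ₁ ≤ (1 + ε) Φ₂` near `0`, a `Φ₂`-admissible pair of scales `r ≤ R ^ (1 + Φ₂ R) ≤ R` can be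
replaced by the `Φ₁`-admissible pair `ρ = min r (R ^ (1 + Φ₁ R)) ≤ R`, losing only
`r / ρ ≤ (R / r) ^ ε`. An upper bound `N_ρ ≤ c (R / ρ) ^ α` then gives
`N_r ≤ N_ρ ≤ c (R / r) ^ (α (1 + ε))`. For lower bounds one also needs
`N_ρ ≤ M (r / ρ) ^ (log₂ M) N_r`, which is where doubling enters; it turns the exponent `α` into
`α + ε (α - log₂ M)`. Letting `ε → 0` and exchanging `Φ₁` and `Φ₂` gives both equalities.
-/

section CoverNumber

variable {X : Type*} [PseudoMetricSpace X]

lemma coverNumber_le_card {r : ℝ} {E : Set X} {s : Finset X}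
    (h : E ⊆ ⋃ x ∈ s, closedBall x r) : coverNumber r E ≤ s.card :=
  iInf₂_le s h

lemma coverNumber_anti {r₁ r₂ : ℝ} (h : r₁ ≤ r₂) (A : Set X) :
    coverNumber r₂ A ≤ coverNumber r₁ A :=
  le_iInf₂ fun s hs => iInf₂_le s
    (hs.trans (iUnion₂_mono fun _ _ => closedBall_subset_closedBall h))

lemma one_le_coverNumber {r : ℝ} {A : Set X} (h : A.Nonempty) :
    1 ≤ coverNumber r A := by
  refine le_iInf₂ fun s hs => ?_
  obtain ⟨a, ha⟩ := h
  obtain ⟨x, hx, -⟩ := mem_iUnion₂.1 (hs ha)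
  exact_mod_cast Finset.card_pos.2 ⟨x, hx⟩

lemma exists_cover_of_cover {r ρ : ℝ} {K : ℕ}
    (hK : ∀ x : X, ∃ t : Finset X, t.card ≤ K ∧ closedBall x r ⊆ ⋃ y ∈ t, closedBall y ρ)
    {A : Set X} {s : Finset X} (hs : A ⊆ ⋃ x ∈ s, closedBall x r) :
    ∃ u : Finset X, u.card ≤ s.card * K ∧ A ⊆ ⋃ y ∈ u, closedBall y ρ := by
  classical
  choose t htK ht using hK
  refine ⟨s.biUnion t, ?_, fun z hz => ?_⟩
  · calc (s.biUnion t).card ≤ ∑ x ∈ s, (t x).card := Finset.card_biUnion_le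
      _ ≤ ∑ _x ∈ s, K := Finset.sum_le_sum fun x _ => htK x
      _ = s.card * K := by rw [Finset.sum_const, smul_eq_mul]
  · obtain ⟨x, hx, hzx⟩ := mem_iUnion₂.1 (hs hz)
    obtain ⟨y, hy, hzy⟩ := mem_iUnion₂.1 (ht x hzx)
    exact mem_iUnion₂.2 ⟨y, Finset.mem_biUnion.2 ⟨x, hx, hy⟩, hzy⟩

end CoverNumber

section Doubling

def IsDoublingWith (X : Type*) [PseudoMetricSpace X] (M : ℕ) : Prop :=
  ∀ (x : X) (R : ℝ), ∃ s : Finset X, s.card ≤ M ∧ closedBall x R ⊆ ⋃ y ∈ s, closedBall y (R / 2)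

variable {X : Type*} [PseudoMetricSpace X] {M : ℕ}

lemma IsDoublingWith.exists_cover_pow (hd : IsDoublingWith X M) (k : ℕ) (x : X) (R : ℝ) :
    ∃ s : Finset X, s.card ≤ M ^ k ∧ closedBall x R ⊆ ⋃ y ∈ s, closedBall y (R / 2 ^ k) := by
  induction k with
  | zero => exact ⟨{x}, by simp, by simp⟩
  | succ k ih =>
    obtain ⟨s, hs, hcov⟩ := ih
    obtain ⟨u, hu, hucov⟩ := exists_cover_of_cover (fun y => hd y (R / 2 ^ k)) hcov
    refine ⟨u, hu.trans ?_, by simpa [pow_succ, div_div] using hucov⟩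
    rw [pow_succ]
    exact Nat.mul_le_mul_right M hs

lemma pow_le_mul_rpow_logb {M q : ℝ} (hM : 1 ≤ M) (hq : 0 ≤ q) {j : ℕ}
    (hj : (2 : ℝ) ^ j ≤ 2 * q) : M ^ j ≤ M * q ^ Real.logb 2 M := by
  have hα₀ : 0 ≤ Real.logb 2 M := Real.logb_nonneg one_lt_two hM
  calc M ^ j = ((2 : ℝ) ^ Real.logb 2 M) ^ j := by
        rw [Real.rpow_logb two_pos (by norm_num) (by linarith)]
    _ = ((2 : ℝ) ^ j) ^ Real.logb 2 M := Real.rpow_pow_comm zero_le_two _ _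
    _ ≤ (2 * q) ^ Real.logb 2 M := Real.rpow_le_rpow (by positivity) hj hα₀
    _ = M * q ^ Real.logb 2 M := by
      rw [Real.mul_rpow zero_le_two hq, Real.rpow_logb two_pos (by norm_num) (by linarith)]

lemma IsDoublingWith.coverNumber_le (hd : IsDoublingWith X M) (hM : 1 ≤ M) {r ρ : ℝ}
    (hρ : 0 < ρ) (hρr : ρ ≤ r) {A : Set X} {s : Finset X} (hs : A ⊆ ⋃ x ∈ s, closedBall x r) :
    coverNumber ρ A ≤ s.card * ENNReal.ofReal (M * (r / ρ) ^ Real.logb 2 M) := by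
  obtain ⟨n, hn, hn'⟩ := exists_nat_pow_near ((one_le_div hρ).2 hρr) one_lt_two
  obtain ⟨u, hu, hucov⟩ := exists_cover_of_cover (hd.exists_cover_pow (n + 1) · r) hs
  have hr2 : r / 2 ^ (n + 1) ≤ ρ := by
    rw [div_le_iff₀ (by positivity)]
    rw [div_lt_iff₀ hρ] at hn'
    linarith
  calc coverNumber ρ A ≤ coverNumber (r / 2 ^ (n + 1)) A := coverNumber_anti hr2 A
    _ ≤ u.card := coverNumber_le_card hucov
    _ ≤ ((s.card * M ^ (n + 1) : ℕ) : ℝ≥0∞) := by exact_mod_cast hu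
    _ ≤ s.card * ENNReal.ofReal (M * (r / ρ) ^ Real.logb 2 M) := by
      rw [Nat.cast_mul, ← ENNReal.ofReal_natCast (M ^ (n + 1))]
      gcongr
      push_cast
      exact pow_le_mul_rpow_logb (by exact_mod_cast hM) (div_nonneg (hρ.le.trans hρr) hρ.le)
        (by rw [pow_succ]; linarith)

lemma IsDoublingWith.coverNumber_closedBall_inter_le (hd : IsDoublingWith X M) (hM : 1 ≤ M)
    (z : X) {r ρ : ℝ} (hρ : 0 < ρ) (hρr : ρ ≤ r) (A : Set X) :
    coverNumber ρ (closedBall z r ∩ A) ≤ ENNReal.ofReal (M * (r / ρ) ^ Real.logb 2 M) := by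
  simpa using hd.coverNumber_le hM hρ hρr (s := {z}) (by simp)

end Doubling

section PhiExponents

variable {X : Type*} [PseudoMetricSpace X] {Φ Φ₁ Φ₂ : ℝ → ℝ} {E : Set X}

def upperPhiExponents (Φ : ℝ → ℝ) (E : Set X) : Set ℝ :=
  {α : ℝ | ∃ c₁ > (0:ℝ), ∃ c₂ > (0:ℝ), ∀ r R : ℝ,
    0 < r → r ≤ R ^ (1 + Φ R) → R ^ (1 + Φ R) ≤ R → R < c₁ → ∀ z ∈ E,
      coverNumber r (closedBall z R ∩ E) ≤ ENNReal.ofReal (c₂ * (R / r) ^ α)}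

def lowerPhiExponents (Φ : ℝ → ℝ) (E : Set X) : Set ℝ :=
  {α : ℝ | ∃ c₁ > (0:ℝ), ∃ c₂ > (0:ℝ), ∀ r R : ℝ,
    0 < r → r ≤ R ^ (1 + Φ R) → R ^ (1 + Φ R) ≤ R → R < c₁ → ∀ z ∈ E,
      ENNReal.ofReal (c₂ * (R / r) ^ α) ≤ coverNumber r (closedBall z R ∩ E)}

lemma upperPhiDim_eq_sInf : upperPhiDim Φ E = sInf (upperPhiExponents Φ E) := rfl

lemma lowerPhiDim_eq_sSup : lowerPhiDim Φ E = sSup (lowerPhiExponents Φ E) := rfl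

lemma upperPhiDim_empty (Φ : ℝ → ℝ) : upperPhiDim Φ (∅ : Set X) = 0 := by
  have huniv : upperPhiExponents Φ (∅ : Set X) = univ :=
    eq_univ_of_forall fun _ =>
      ⟨1, one_pos, 1, one_pos, fun _ _ _ _ _ _ z hz => absurd hz (notMem_empty z)⟩
  rw [upperPhiDim_eq_sInf, huniv, Real.sInf_of_not_bddBelow not_bddBelow_univ]

lemma lowerPhiDim_empty (Φ : ℝ → ℝ) : lowerPhiDim Φ (∅ : Set X) = 0 := by
  have huniv : lowerPhiExponents Φ (∅ : Set X) = univ :=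
    eq_univ_of_forall fun _ =>
      ⟨1, one_pos, 1, one_pos, fun _ _ _ _ _ _ z hz => absurd hz (notMem_empty z)⟩
  rw [lowerPhiDim_eq_sSup, huniv, Real.sSup_of_not_bddAbove not_bddAbove_univ]

lemma rpow_one_add_le_self {R s : ℝ} (hR : R ∈ Ioo (0 : ℝ) 1) (hs : 0 ≤ s) : R ^ (1 + s) ≤ R :=
  Real.rpow_le_self_of_le_one hR.1.le hR.2.le (by linarith)

lemma eventually_exists_scales_div_eq (hΦ : ∀ x ∈ Ioo (0 : ℝ) 1, 0 ≤ Φ x) {c₁ : ℝ}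
    (hc₁ : 0 < c₁) :
    ∀ᶠ t in atTop, ∃ r R : ℝ, 0 < r ∧ r ≤ R ^ (1 + Φ R) ∧ R ^ (1 + Φ R) ≤ R ∧ R < c₁ ∧
      R / r = t := by
  obtain ⟨R, hR, hRc⟩ : ∃ R ∈ Ioo (0 : ℝ) 1, R < c₁ :=
    ⟨min c₁ 1 / 2, ⟨by positivity, by linarith [min_le_right c₁ 1]⟩,
      by linarith [min_le_left c₁ 1, lt_min hc₁ one_pos]⟩
  have hpos : 0 < R ^ (1 + Φ R) := Real.rpow_pos_of_pos hR.1 _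
  filter_upwards [eventually_ge_atTop (R / R ^ (1 + Φ R))] with t ht
  have ht0 : 0 < t := (div_pos hR.1 hpos).trans_le ht
  refine ⟨R / t, R, div_pos hR.1 ht0, ?_, rpow_one_add_le_self hR (hΦ R hR), hRc,
    div_div_cancel₀ hR.1.ne'⟩
  rwa [div_le_iff₀ ht0, mul_comm, ← div_le_iff₀ hpos]

lemma le_of_frequently_mul_rpow_le {a b c d : ℝ} (hc : 0 < c)
    (h : ∃ᶠ t in atTop, c * t ^ a ≤ d * t ^ b) : a ≤ b := by
  by_contra! hba
  have hgrow : ∀ᶠ t : ℝ in atTop, d < c * t ^ (a - b) :=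
    ((tendsto_rpow_atTop (sub_pos.2 hba)).const_mul_atTop hc).eventually_gt_atTop d
  obtain ⟨t, hle, hlt, ht⟩ := (h.and_eventually (hgrow.and (eventually_gt_atTop 0))).exists
  have : d * t ^ b < c * t ^ a := by
    calc d * t ^ b < c * t ^ (a - b) * t ^ b := by gcongr
      _ = c * t ^ a := by rw [mul_assoc, ← Real.rpow_add ht, sub_add_cancel]
  linarith

lemma nonneg_of_mem_upperPhiExponents (hE : E.Nonempty)
    (hΦ : ∀ x ∈ Ioo (0 : ℝ) 1, 0 ≤ Φ x) {α : ℝ} (hα : α ∈ upperPhiExponents Φ E) : 0 ≤ α := by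
  obtain ⟨c₁, hc₁, c₂, -, h⟩ := hα
  obtain ⟨z, hz⟩ := hE
  refine le_of_frequently_mul_rpow_le one_pos (d := c₂) (Eventually.frequently ?_)
  filter_upwards [eventually_exists_scales_div_eq hΦ hc₁] with t ht
  obtain ⟨r, R, hr, hrR, hR, hRc, rfl⟩ := ht
  have hz' : z ∈ closedBall z R ∩ E := ⟨mem_closedBall_self (hr.le.trans (hrR.trans hR)), hz⟩
  have hN := (one_le_coverNumber ⟨z, hz'⟩).trans (h r R hr hrR hR hRc z hz)
  rw [ENNReal.one_le_ofReal] at hN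
  simpa using hN

lemma zero_mem_lowerPhiExponents : (0 : ℝ) ∈ lowerPhiExponents Φ E := by
  refine ⟨1, one_pos, 1, one_pos, fun r R hr hrR hR _ z hz => ?_⟩
  have hz' : z ∈ closedBall z R ∩ E := ⟨mem_closedBall_self (hr.le.trans (hrR.trans hR)), hz⟩
  simpa using one_le_coverNumber ⟨z, hz'⟩

lemma logb_mem_upperPhiExponents {M : ℕ} (hd : IsDoublingWith X M) (hM : 1 ≤ M) :
    Real.logb 2 M ∈ upperPhiExponents Φ E :=
  ⟨1, one_pos, M, by positivity, fun _ _ hr hrR hR _ z _ =>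
    hd.coverNumber_closedBall_inter_le hM z hr (hrR.trans hR) E⟩

lemma le_logb_of_mem_lowerPhiExponents {M : ℕ} (hd : IsDoublingWith X M) (hM : 1 ≤ M)
    (hE : E.Nonempty) (hΦ : ∀ x ∈ Ioo (0 : ℝ) 1, 0 ≤ Φ x) {α : ℝ}
    (hα : α ∈ lowerPhiExponents Φ E) : α ≤ Real.logb 2 M := by
  obtain ⟨c₁, hc₁, c₂, hc₂, h⟩ := hα
  obtain ⟨z, hz⟩ := hE
  refine le_of_frequently_mul_rpow_le hc₂ (d := M) (Eventually.frequently ?_)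
  filter_upwards [eventually_exists_scales_div_eq hΦ hc₁] with t ht
  obtain ⟨r, R, hr, hrR, hR, hRc, rfl⟩ := ht
  have hN := (h r R hr hrR hR hRc z hz).trans
    (hd.coverNumber_closedBall_inter_le hM z hr (hrR.trans hR) E)
  have hRr : 0 ≤ R / r := div_nonneg (hr.le.trans (hrR.trans hR)) hr.le
  exact (ENNReal.ofReal_le_ofReal_iff (by positivity)).1 hN

lemma eventually_le_one_add_mul_of_tendsto_div (h₂ : ∀ x ∈ Ioo (0 : ℝ) 1, 0 ≤ Φ₂ x)
    (hratio : Tendsto (fun x => Φ₁ x / Φ₂ x) (𝓝[Ioo 0 1] 0) (𝓝 1)) {ε : ℝ} (hε : 0 < ε) :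
    ∀ᶠ x in 𝓝[Ioo 0 1] 0, Φ₁ x ≤ (1 + ε) * Φ₂ x := by
  filter_upwards [hratio.eventually_lt_const (by linarith : (1 : ℝ) < 1 + ε),
    hratio.eventually_const_lt one_pos, self_mem_nhdsWithin] with x hlt hpos hx
  have hΦ₂ : 0 < Φ₂ x := (h₂ x hx).lt_of_ne fun h => by simp [← h] at hpos
  calc Φ₁ x = Φ₁ x / Φ₂ x * Φ₂ x := (div_mul_cancel₀ _ hΦ₂.ne').symm
    _ ≤ (1 + ε) * Φ₂ x := by gcongr

lemma div_rpow_one_add_le {R r s₁ s₂ ε : ℝ} (hR : R ∈ Ioo (0 : ℝ) 1) (hr : 0 < r)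
    (hr₂ : r ≤ R ^ (1 + s₂)) (hε : 0 ≤ ε) (hs : s₁ ≤ (1 + ε) * s₂) :
    r / R ^ (1 + s₁) ≤ (R / r) ^ ε := by
  have hR0 := hR.1
  have hRs₂ : R ^ (-s₂) ≤ R / r := by
    rw [le_div_iff₀ hr]
    calc R ^ (-s₂) * r ≤ R ^ (-s₂) * R ^ (1 + s₂) := by gcongr
      _ = R := by rw [← Real.rpow_add hR0]; norm_num
  calc r / R ^ (1 + s₁) ≤ R ^ (1 + s₂) / R ^ (1 + s₁) := by gcongr
    _ = R ^ (s₂ - s₁) := by rw [← Real.rpow_sub hR0]; ring_nf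
    _ ≤ R ^ (-s₂ * ε) := Real.rpow_le_rpow_of_exponent_ge hR0 hR.2.le (by nlinarith)
    _ = (R ^ (-s₂)) ^ ε := Real.rpow_mul hR0.le _ _
    _ ≤ (R / r) ^ ε := by gcongr

lemma exists_scale_of_eventually_le (h₁ : ∀ x ∈ Ioo (0 : ℝ) 1, 0 ≤ Φ₁ x) {ε : ℝ} (hε : 0 ≤ ε)
    (hcomp : ∀ᶠ x in 𝓝[Ioo 0 1] 0, Φ₁ x ≤ (1 + ε) * Φ₂ x) {c₁ : ℝ} (hc₁ : 0 < c₁) :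
    ∃ c > 0, ∀ r R : ℝ, 0 < r → r ≤ R ^ (1 + Φ₂ R) → R ^ (1 + Φ₂ R) ≤ R → R < c →
      ∃ ρ, 0 < ρ ∧ ρ ≤ r ∧ ρ ≤ R ^ (1 + Φ₁ R) ∧ R ^ (1 + Φ₁ R) ≤ R ∧ R < c₁ ∧
        r / ρ ≤ (R / r) ^ ε := by
  obtain ⟨δ, hδ, hsub⟩ := Metric.mem_nhdsWithin_iff.1 hcomp
  refine ⟨min c₁ (min δ 1), by positivity, fun r R hr hr₂ hR₂ hRc => ?_⟩
  have hR : R ∈ Ioo (0 : ℝ) 1 :=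
    ⟨hr.trans_le (hr₂.trans hR₂), hRc.trans_le ((min_le_right _ _).trans (min_le_right _ _))⟩
  have hRδ : R < δ := hRc.trans_le ((min_le_right _ _).trans (min_le_left _ _))
  have hcmp : Φ₁ R ≤ (1 + ε) * Φ₂ R :=
    hsub ⟨by rwa [mem_ball, Real.dist_eq, sub_zero, abs_of_pos hR.1], hR⟩
  have hRr : 1 ≤ R / r := (one_le_div hr).2 (hr₂.trans hR₂)
  refine ⟨min r (R ^ (1 + Φ₁ R)), lt_min hr (Real.rpow_pos_of_pos hR.1 _), min_le_left _ _,
    min_le_right _ _, rpow_one_add_le_self hR (h₁ R hR), hRc.trans_le (min_le_left _ _), ?_⟩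
  rcases le_total r (R ^ (1 + Φ₁ R)) with h | h
  · rw [min_eq_left h, div_self hr.ne']
    exact Real.one_le_rpow hRr hε
  · rw [min_eq_right h]
    exact div_rpow_one_add_le hR hr hr₂ hε hcmp

lemma mul_one_add_mem_upperPhiExponents (h₁ : ∀ x ∈ Ioo (0 : ℝ) 1, 0 ≤ Φ₁ x) {ε : ℝ}
    (hε : 0 ≤ ε) (hcomp : ∀ᶠ x in 𝓝[Ioo 0 1] 0, Φ₁ x ≤ (1 + ε) * Φ₂ x) {α : ℝ} (hα_nonneg : 0 ≤ α)
    (hα : α ∈ upperPhiExponents Φ₁ E) : α * (1 + ε) ∈ upperPhiExponents Φ₂ E := by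
  obtain ⟨c₁, hc₁, c₂, hc₂, h⟩ := hα
  obtain ⟨c, hc, hscale⟩ := exists_scale_of_eventually_le h₁ hε hcomp hc₁
  refine ⟨c, hc, c₂, hc₂, fun r R hr hr₂ hR₂ hRc z hz => ?_⟩
  obtain ⟨ρ, hρ, hρr, hρ₁, hR₁, hRc₁, hcost⟩ := hscale r R hr hr₂ hR₂ hRc
  have hRr : 0 < R / r := div_pos (hr.trans_le (hr₂.trans hR₂)) hr
  calc coverNumber r (closedBall z R ∩ E) ≤ coverNumber ρ (closedBall z R ∩ E) :=
        coverNumber_anti hρr _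
    _ ≤ ENNReal.ofReal (c₂ * (R / ρ) ^ α) := h ρ R hρ hρ₁ hR₁ hRc₁ z hz
    _ ≤ ENNReal.ofReal (c₂ * (R / r) ^ (α * (1 + ε))) := by
      gcongr
      calc (R / ρ) ^ α = (R / r) ^ α * (r / ρ) ^ α := by
            rw [← Real.mul_rpow hRr.le (by positivity), div_mul_div_cancel₀ hr.ne']
        _ ≤ (R / r) ^ α * ((R / r) ^ ε) ^ α := by gcongr
        _ = (R / r) ^ (α * (1 + ε)) := by
          rw [← Real.rpow_mul hRr.le, ← Real.rpow_add hRr]; ring_nf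

lemma add_mul_sub_mem_lowerPhiExponents {M : ℕ} (hd : IsDoublingWith X M) (hM : 1 ≤ M)
    (h₁ : ∀ x ∈ Ioo (0 : ℝ) 1, 0 ≤ Φ₁ x) {ε : ℝ} (hε : 0 ≤ ε)
    (hcomp : ∀ᶠ x in 𝓝[Ioo 0 1] 0, Φ₁ x ≤ (1 + ε) * Φ₂ x) {α : ℝ} (hα_le : α ≤ Real.logb 2 M)
    (hα : α ∈ lowerPhiExponents Φ₁ E) :
    α + ε * (α - Real.logb 2 M) ∈ lowerPhiExponents Φ₂ E := by
  set α₀ := Real.logb 2 M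
  obtain ⟨c₁, hc₁, c₂, hc₂, h⟩ := hα
  obtain ⟨c, hc, hscale⟩ := exists_scale_of_eventually_le h₁ hε hcomp hc₁
  have hM0 : (0 : ℝ) < M := by exact_mod_cast hM
  refine ⟨c, hc, c₂ / M, by positivity, fun r R hr hr₂ hR₂ hRc z hz => ?_⟩
  obtain ⟨ρ, hρ, hρr, hρ₁, hR₁, hRc₁, hcost⟩ := hscale r R hr hr₂ hR₂ hRc
  have hRr : 0 < R / r := div_pos (hr.trans_le (hr₂.trans hR₂)) hr
  have hrρ : 0 < r / ρ := div_pos hr hρ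
  set K := (M : ℝ) * (r / ρ) ^ α₀ with hKdef
  have hK : 0 < K := by positivity
  -- `N_ρ ≤ N_r · K` by doubling, so the lower bound at `(ρ, R)` passes to `(r, R)` divided by `K`
  have hreal : c₂ / M * (R / r) ^ (α + ε * (α - α₀)) * K ≤ c₂ * (R / ρ) ^ α := by
    have hcost' : (R / r) ^ (ε * (α - α₀)) ≤ (r / ρ) ^ (α - α₀) := by
      rw [Real.rpow_mul hRr.le]
      exact Real.rpow_le_rpow_of_nonpos hrρ hcost (by linarith)
    calc c₂ / M * (R / r) ^ (α + ε * (α - α₀)) * K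
        = c₂ * (R / r) ^ α * ((R / r) ^ (ε * (α - α₀)) * (r / ρ) ^ α₀) := by
          rw [hKdef, Real.rpow_add hRr]; field_simp
      _ ≤ c₂ * (R / r) ^ α * ((r / ρ) ^ (α - α₀) * (r / ρ) ^ α₀) := by gcongr
      _ = c₂ * (R / ρ) ^ α := by
          rw [← Real.rpow_add hrρ, sub_add_cancel, mul_assoc, ← Real.mul_rpow hRr.le hrρ.le,
            div_mul_div_cancel₀ hr.ne']
  refine le_iInf₂ fun s hs => ?_
  refine (ENNReal.mul_le_mul_iff_left (ENNReal.ofReal_pos.2 hK).ne' ENNReal.ofReal_ne_top).1 ?_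
  calc ENNReal.ofReal (c₂ / M * (R / r) ^ (α + ε * (α - α₀))) * ENNReal.ofReal K
      = ENNReal.ofReal (c₂ / M * (R / r) ^ (α + ε * (α - α₀)) * K) :=
        (ENNReal.ofReal_mul (by positivity)).symm
    _ ≤ ENNReal.ofReal (c₂ * (R / ρ) ^ α) := ENNReal.ofReal_le_ofReal hreal
    _ ≤ coverNumber ρ (closedBall z R ∩ E) := h ρ R hρ hρ₁ hR₁ hRc₁ z hz
    _ ≤ s.card * ENNReal.ofReal K := hd.coverNumber_le hM hρ hρr hs

lemma le_of_forall_pos_le_add_mul {a b k : ℝ} (h : ∀ ε > 0, a ≤ b + ε * k) : a ≤ b := by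
  have hlim : Tendsto (fun ε => b + ε * k) (𝓝[>] 0) (𝓝 b) := by
    have : Continuous fun ε : ℝ => b + ε * k := by fun_prop
    simpa using (this.tendsto 0).mono_left nhdsWithin_le_nhds
  exact ge_of_tendsto hlim (eventually_nhdsWithin_of_forall h)

lemma upperPhiDim_le_of_tendsto_div {M : ℕ} (hd : IsDoublingWith X M) (hM : 1 ≤ M)
    (hE : E.Nonempty) (h₁ : ∀ x ∈ Ioo (0 : ℝ) 1, 0 ≤ Φ₁ x) (h₂ : ∀ x ∈ Ioo (0 : ℝ) 1, 0 ≤ Φ₂ x)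
    (hratio : Tendsto (fun x => Φ₁ x / Φ₂ x) (𝓝[Ioo 0 1] 0) (𝓝 1)) :
    upperPhiDim Φ₂ E ≤ upperPhiDim Φ₁ E := by
  have hne : (upperPhiExponents Φ₁ E).Nonempty := ⟨_, logb_mem_upperPhiExponents hd hM⟩
  have hbdd : BddBelow (upperPhiExponents Φ₂ E) :=
    ⟨0, fun _ hα => nonneg_of_mem_upperPhiExponents hE h₂ hα⟩
  refine le_of_forall_pos_le_add_mul (k := upperPhiDim Φ₁ E) fun ε hε => ?_
  have hcomp := eventually_le_one_add_mul_of_tendsto_div h₂ hratio hε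
  have h1ε : 0 < 1 + ε := by linarith
  have : upperPhiDim Φ₂ E / (1 + ε) ≤ upperPhiDim Φ₁ E :=
    le_csInf hne fun α hα => (div_le_iff₀ h1ε).2 <| csInf_le hbdd <|
      mul_one_add_mem_upperPhiExponents h₁ hε.le hcomp
        (nonneg_of_mem_upperPhiExponents hE h₁ hα) hα
  rw [div_le_iff₀ h1ε] at this
  linarith

lemma lowerPhiDim_le_of_tendsto_div {M : ℕ} (hd : IsDoublingWith X M) (hM : 1 ≤ M)
    (hE : E.Nonempty) (h₁ : ∀ x ∈ Ioo (0 : ℝ) 1, 0 ≤ Φ₁ x) (h₂ : ∀ x ∈ Ioo (0 : ℝ) 1, 0 ≤ Φ₂ x)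
    (hratio : Tendsto (fun x => Φ₁ x / Φ₂ x) (𝓝[Ioo 0 1] 0) (𝓝 1)) :
    lowerPhiDim Φ₁ E ≤ lowerPhiDim Φ₂ E := by
  have hne : (lowerPhiExponents Φ₁ E).Nonempty := ⟨0, zero_mem_lowerPhiExponents⟩
  have hbdd : BddAbove (lowerPhiExponents Φ₂ E) :=
    ⟨_, fun _ hα => le_logb_of_mem_lowerPhiExponents hd hM hE h₂ hα⟩
  refine le_of_forall_pos_le_add_mul (k := Real.logb 2 M - lowerPhiDim Φ₁ E) fun ε hε => ?_
  have hcomp := eventually_le_one_add_mul_of_tendsto_div h₂ hratio hε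
  have h1ε : 0 < 1 + ε := by linarith
  have : lowerPhiDim Φ₁ E ≤ (lowerPhiDim Φ₂ E + ε * Real.logb 2 M) / (1 + ε) := by
    refine csSup_le hne fun α hα => (le_div_iff₀ h1ε).2 ?_
    have := le_csSup hbdd (add_mul_sub_mem_lowerPhiExponents hd hM h₁ hε.le hcomp
      (le_logb_of_mem_lowerPhiExponents hd hM hE h₁ hα) hα)
    rw [← lowerPhiDim_eq_sSup] at this
    linarith
  rw [le_div_iff₀ h1ε] at this
  linarith

end PhiExponents

/-- If `Φ₁ / Φ₂ → 1` at `0` then the `Φ₁`- and `Φ₂`-dimensions agree for every set. -/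
theorem phiDim_eq_of_ratio_tendsto_one {X : Type*} [MetricSpace X]
    (hX : IsDoublingSpace X) (Φ₁ Φ₂ : ℝ → ℝ)
    (h₁ : IsDimensionFunction Φ₁) (h₂ : IsDimensionFunction Φ₂)
    (hratio : Tendsto (fun x => Φ₁ x / Φ₂ x) (nhdsWithin 0 (Ioo 0 1)) (nhds 1))
    (E : Set X) :
    upperPhiDim Φ₁ E = upperPhiDim Φ₂ E ∧ lowerPhiDim Φ₁ E = lowerPhiDim Φ₂ E := by
  obtain ⟨M, hM, hd⟩ := hX
  rcases E.eq_empty_or_nonempty with rfl | hE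
  · simp only [upperPhiDim_empty, lowerPhiDim_empty, and_self]
  have hratio' : Tendsto (fun x => Φ₂ x / Φ₁ x) (𝓝[Ioo 0 1] 0) (𝓝 1) := by
    simpa only [inv_div, inv_one] using hratio.inv₀ one_ne_zero
  exact ⟨le_antisymm (upperPhiDim_le_of_tendsto_div hd hM hE h₂.1 h₁.1 hratio')
      (upperPhiDim_le_of_tendsto_div hd hM hE h₁.1 h₂.1 hratio),
    le_antisymm (lowerPhiDim_le_of_tendsto_div hd hM hE h₁.1 h₂.1 hratio)
      (lowerPhiDim_le_of_tendsto_div hd hM hE h₂.1 h₁.1 hratio')⟩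

end
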